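/- Let p ≥ 2 and 1 ≤ k ≤ m ≤ n be integers. The number of p-ary labeled trees T on [n] whose maximal decreasing subtree MD(T) has k vertices and for which the subtree Y of T consisting of MD(T) together with all its increasing leaves has exactly m vertices equals binom(n, m) · y(m,k) · f(n−k, m−k) / binom(n−k, m−k). -/

import Mathlib

open scoped Classical

/-- A `p`-ary labeled forest: a finite set of vertices (labels, which are
natural numbers), where each non-root vertex has a parent together with a
slot position in `Fin p` (the `p` ordered, possibly empty, child positions),
each (parent, slot) pair is occupied by at most one child, and every vertex
reaches a root (a vertex with no parent) by iterating the parent map. -/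
structure PForest (p : ℕ) where
  verts : Finset ℕ
  par : ℕ → Option (ℕ × Fin p)
  par_eq_none_of_not_mem : ∀ v, v ∉ verts → par v = none
  par_mem : ∀ v ∈ verts, ∀ w s, par v = some (w, s) → w ∈ verts
  par_inj : ∀ u ∈ verts, ∀ v ∈ verts, ∀ w s,
      par u = some (w, s) → par v = some (w, s) → u = v
  reaches_root : ∀ v ∈ verts,
      ∃ k, par ((fun x => ((par x).map Prod.fst).getD x)^[k] v) = none

namespace PForest

variable {p : ℕ}

/-- One step from a vertex towards the root (identity on roots and
non-vertices). -/
def step (T : PForest p) (v : ℕ) : ℕ := ((T.par v).map Prod.fst).getD v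

/-- The roots of the forest: vertices with no parent. -/
def roots (T : PForest p) : Finset ℕ := T.verts.filter (fun v => T.par v = none)

/-- `v` belongs to the maximal decreasing subtree `MD(T)`: every edge on the
path from `v` up to its root goes from a smaller label (child) to a larger
label (parent). -/
def InMD (T : PForest p) (v : ℕ) : Prop :=
  v ∈ T.verts ∧ ∀ k w s, T.par (T.step^[k] v) = some (w, s) → T.step^[k] v < w

/-- The vertex set of the maximal decreasing subtree `MD(T)`. -/
noncomputable def mdSet (T : PForest p) : Finset ℕ :=
  T.verts.filter (fun v => T.InMD v)

/-- `T` is a `p`-ary labeled tree on `[n] = {1, …, n}`: its vertex set is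
`{1, …, n}` and it has exactly one root (and no root when `n = 0`, i.e. the
empty tree). -/
def IsTreeOn (T : PForest p) (n : ℕ) : Prop :=
  T.verts = Finset.Icc 1 n ∧ T.roots.card = min n 1

/-- `v` is a leaf of `T`: it has no children. -/
def IsLeaf (T : PForest p) (v : ℕ) : Prop := ∀ u s, T.par u ≠ some (v, s)

end PForest

/-- `t(n,k)`: the number of `p`-ary labeled trees on `[n]` whose maximal
decreasing subtree has exactly `k` vertices. -/
noncomputable def t (p n k : ℕ) : ℕ :=
  Nat.card {T : PForest p // T.IsTreeOn n ∧ T.mdSet.card = k}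

/-- `y(n,k)`: the number of `p`-ary labeled trees on `[n]` whose maximal
decreasing subtree has exactly `k` vertices and all of whose remaining
`n - k` vertices are (increasing) leaves; equivalently, trees obtained by
attaching `n - k` increasing leaves to a decreasing tree with `k` vertices. -/
noncomputable def y (p n k : ℕ) : ℕ :=
  Nat.card {T : PForest p // T.IsTreeOn n ∧ T.mdSet.card = k ∧
    ∀ v ∈ T.verts, ¬ T.InMD v → T.IsLeaf v}

/-- `f(n,k)`: the number of (unordered) forests on `[n]` consisting of `k`
`p`-ary labeled trees. -/
noncomputable def f (p n k : ℕ) : ℕ :=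
  Nat.card {T : PForest p // T.verts = Finset.Icc 1 n ∧ T.roots.card = k}

/-! Cutting a tree `T` along the edges leaving `Y` splits it into `Y` itself (a tree with
`MD(Y) = MD(T)` all of whose other vertices are leaves) and a forest `F` on the vertices outside
`MD(T)` whose roots are exactly the increasing leaves of `Y`; conversely every such pair glues back
to a unique tree. Choosing the `m`-set of vertices of `Y` and relabelling it order-preservingly,
the possible `Y` are counted by `binom(n,m) · y(m,k)`. By symmetry, the forests on an
`(n-k)`-set with a prescribed `(m-k)`-set of roots are a `1 / binom(n-k, m-k)` fraction of the
`f(n-k, m-k)` forests with `m-k` roots. -/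

theorem Nat.card_subtype_eq_sum_card_fiber {α β : Type*} {P : α → Prop} [Finite {x // P x}]
    (φ : α → β) {s : Finset β} (hφ : ∀ x, P x → φ x ∈ s) :
    Nat.card {x // P x} = ∑ b ∈ s, Nat.card {x // P x ∧ φ x = b} := by
  let g : {x // P x} → s := fun x => ⟨φ x, hφ x x.2⟩
  have hfiber (b : s) : Nat.card {x // g x = b} = Nat.card {x // P x ∧ φ x = b} :=
    Nat.card_congr <| (Equiv.subtypeEquivRight fun x => Subtype.ext_iff).trans
      (Equiv.subtypeSubtypeEquivSubtypeInter P (fun x => φ x = b))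
  rw [← Nat.card_congr (Equiv.sigmaFiberEquiv g), Nat.card_sigma, ← Finset.sum_coe_sort s]
  exact Finset.sum_congr rfl fun b _ => hfiber b

theorem exists_perm_eqOn {s : Finset ℕ} {f : ℕ → ℕ} (hf : Set.InjOn f s) :
    ∃ σ : ℕ ≃ ℕ, ∀ x ∈ s, σ x = f x := by
  obtain ⟨σ, hσ⟩ := Cardinal.extend_function_of_lt (s := (s : Set ℕ))
    ⟨fun x => f x, fun x y h => Subtype.ext (hf x.2 y.2 h)⟩
    (by rw [Cardinal.mk_nat]; exact Cardinal.lt_aleph0_iff_set_finite.2 s.finite_toSet)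
    ⟨Equiv.refl ℕ⟩
  exact ⟨σ, fun x hx => hσ ⟨x, hx⟩⟩

theorem exists_perm_strictMonoOn_image_eq_Icc (A : Finset ℕ) :
    ∃ σ : ℕ ≃ ℕ, StrictMonoOn σ A ∧ A.image σ = Finset.Icc 1 A.card := by
  let rank : ℕ → ℕ := fun x => (A.filter (· ≤ x)).card
  have hmono : StrictMonoOn rank A := by
    intro x hx y hy hxy
    refine Finset.card_lt_card <| (Finset.ssubset_iff_of_subset ?_).2 ⟨y, ?_, ?_⟩
    · intro a ha
      simp only [Finset.mem_filter] at ha ⊢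
      exact ⟨ha.1, ha.2.trans hxy.le⟩
    · simpa using hy
    · simp [hxy]
  obtain ⟨σ, hσ⟩ := exists_perm_eqOn hmono.injOn
  refine ⟨σ, hmono.congr fun x hx => (hσ x hx).symm, ?_⟩
  rw [Finset.image_congr hσ]
  refine Finset.eq_of_subset_of_card_le (fun y hy => ?_) ?_
  · obtain ⟨x, hx, rfl⟩ := Finset.mem_image.1 hy
    refine Finset.mem_Icc.2 ⟨Finset.card_pos.2 ⟨x, by simp [hx]⟩, Finset.card_filter_le _ _⟩
  · rw [Nat.card_Icc, Finset.card_image_of_injOn hmono.injOn]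
    omega

theorem exists_perm_image_eq {A B : Finset ℕ} (h : A.card = B.card) :
    ∃ σ : ℕ ≃ ℕ, A.image σ = B := by
  obtain ⟨σ, -, hσ⟩ := exists_perm_strictMonoOn_image_eq_Icc A
  obtain ⟨τ, -, hτ⟩ := exists_perm_strictMonoOn_image_eq_Icc B
  refine ⟨σ.trans τ.symm, ?_⟩
  rw [Equiv.coe_trans, ← Finset.image_image, hσ, h, ← hτ, Finset.image_image]
  simp

theorem exists_perm_image_eq_image_eq {A₁ A₂ B₁ B₂ : Finset ℕ} (hA : Disjoint A₁ A₂)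
    (hB : Disjoint B₁ B₂) (h₁ : A₁.card = B₁.card) (h₂ : A₂.card = B₂.card) :
    ∃ σ : ℕ ≃ ℕ, A₁.image σ = B₁ ∧ A₂.image σ = B₂ := by
  obtain ⟨σ₁, hσ₁⟩ := exists_perm_image_eq h₁
  obtain ⟨σ₂, hσ₂⟩ := exists_perm_image_eq h₂
  let g : ℕ → ℕ := fun x => if x ∈ A₁ then σ₁ x else σ₂ x
  have hg₁ : ∀ x ∈ A₁, g x = σ₁ x := fun x hx => if_pos hx
  have hg₂ : ∀ x ∈ A₂, g x = σ₂ x := fun x hx => if_neg (Finset.disjoint_right.1 hA hx)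
  have hB₁ : ∀ x ∈ A₁, σ₁ x ∈ B₁ := fun x hx => hσ₁ ▸ Finset.mem_image_of_mem σ₁ hx
  have hB₂ : ∀ x ∈ A₂, σ₂ x ∈ B₂ := fun x hx => hσ₂ ▸ Finset.mem_image_of_mem σ₂ hx
  have hinj : Set.InjOn g ↑(A₁ ∪ A₂) := by
    intro x hx y hy hxy
    simp only [Finset.coe_union, Set.mem_union, Finset.mem_coe] at hx hy
    rcases hx with hx | hx <;> rcases hy with hy | hy
    · rw [hg₁ x hx, hg₁ y hy] at hxy; exact σ₁.injective hxy
    · rw [hg₁ x hx, hg₂ y hy] at hxy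
      exact absurd (hxy ▸ hB₂ y hy) (Finset.disjoint_left.1 hB (hB₁ x hx))
    · rw [hg₂ x hx, hg₁ y hy] at hxy
      exact absurd (hxy ▸ hB₂ x hx) (Finset.disjoint_left.1 hB (hB₁ y hy))
    · rw [hg₂ x hx, hg₂ y hy] at hxy; exact σ₂.injective hxy
  obtain ⟨σ, hσ⟩ := exists_perm_eqOn hinj
  refine ⟨σ, ?_, ?_⟩
  · rw [← hσ₁]
    exact Finset.image_congr fun x hx => (hσ x (Finset.mem_union_left _ hx)).trans (hg₁ x hx)
  · rw [← hσ₂]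
    exact Finset.image_congr fun x hx => (hσ x (Finset.mem_union_right _ hx)).trans (hg₂ x hx)

namespace PForest

variable {p : ℕ}

@[ext]
theorem ext {T U : PForest p} (hv : T.verts = U.verts) (hp : T.par = U.par) : T = U := by
  cases T; cases U; simp_all

theorem mem_verts_of_par_eq_some {T : PForest p} {v : ℕ} {ws : ℕ × Fin p}
    (h : T.par v = some ws) : v ∈ T.verts := by
  by_contra hv
  simp [T.par_eq_none_of_not_mem v hv] at h

theorem step_eq_of_par_eq_some {T : PForest p} {v w : ℕ} {s : Fin p}
    (h : T.par v = some (w, s)) : T.step v = w := by simp [step, h]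

theorem step_eq_of_par_eq_none {T : PForest p} {v : ℕ} (h : T.par v = none) : T.step v = v := by
  simp [step, h]

theorem step_mem {T : PForest p} {v : ℕ} (hv : v ∈ T.verts) : T.step v ∈ T.verts := by
  rcases h : T.par v with _ | ⟨w, s⟩
  · rwa [step_eq_of_par_eq_none h]
  · rw [step_eq_of_par_eq_some h]; exact T.par_mem v hv w s h

theorem iterate_step_mem {T : PForest p} {v : ℕ} (hv : v ∈ T.verts) (j : ℕ) :
    T.step^[j] v ∈ T.verts := by
  induction j with
  | zero => exact hv
  | succ j ih => rw [Function.iterate_succ_apply']; exact step_mem ih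

theorem mem_roots {T : PForest p} {v : ℕ} : v ∈ T.roots ↔ v ∈ T.verts ∧ T.par v = none := by
  simp [roots]

theorem roots_subset (T : PForest p) : T.roots ⊆ T.verts := Finset.filter_subset _ _

theorem mem_mdSet {T : PForest p} {v : ℕ} : v ∈ T.mdSet ↔ T.InMD v := by
  simp only [mdSet, Finset.mem_filter, and_iff_right_iff_imp]
  exact fun h => h.1

theorem mdSet_subset (T : PForest p) : T.mdSet ⊆ T.verts := Finset.filter_subset _ _

theorem InMD.step {T : PForest p} {v : ℕ} (h : T.InMD v) : T.InMD (T.step v) :=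
  ⟨step_mem h.1, fun k w s hk => h.2 (k + 1) w s (by rwa [Function.iterate_succ_apply])⟩

theorem InMD.of_par_eq_some {T : PForest p} {v w : ℕ} {s : Fin p} (h : T.InMD v)
    (hp : T.par v = some (w, s)) : T.InMD w :=
  step_eq_of_par_eq_some hp ▸ h.step

theorem inMD_of_par_eq_none {T : PForest p} {v : ℕ} (hv : v ∈ T.verts) (h : T.par v = none) :
    T.InMD v := by
  have hfix : ∀ k, T.step^[k] v = v := fun k =>
    Function.iterate_fixed (step_eq_of_par_eq_none h) k
  exact ⟨hv, fun k w s hk => by simp [hfix, h] at hk⟩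

theorem inMD_congr {T U : PForest p} {C : Finset ℕ} (hpar : ∀ v ∈ C, T.par v = U.par v)
    (hcl : ∀ v ∈ C, U.step v ∈ C) {v : ℕ} (hv : v ∈ C) (hvT : v ∈ T.verts ↔ v ∈ U.verts) :
    T.InMD v ↔ U.InMD v := by
  have hiter : ∀ j, T.step^[j] v = U.step^[j] v ∧ U.step^[j] v ∈ C := by
    intro j
    induction j with
    | zero => exact ⟨rfl, hv⟩
    | succ j ih =>
      rw [Function.iterate_succ_apply', Function.iterate_succ_apply', ih.1]
      exact ⟨by simp only [PForest.step, hpar _ ih.2], hcl _ ih.2⟩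
  unfold InMD
  refine and_congr hvT (forall_congr' fun j => ?_)
  rw [(hiter j).1, hpar _ (hiter j).2]

/-- The `reaches_root` condition for an arbitrary parent map `q`. -/
def ReachesRoot (q : ℕ → Option (ℕ × Fin p)) (v : ℕ) : Prop :=
  ∃ k, q ((fun x => ((q x).map Prod.fst).getD x)^[k] v) = none

theorem ReachesRoot.of_eq_some {q : ℕ → Option (ℕ × Fin p)} {v w : ℕ} {s : Fin p}
    (h : q v = some (w, s)) (hw : ReachesRoot q w) : ReachesRoot q v := by
  obtain ⟨k, hk⟩ := hw
  exact ⟨k + 1, by simpa [Function.iterate_succ_apply, h] using hk⟩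

theorem induction_on_par (T : PForest p) {P : ℕ → Prop}
    (hroot : ∀ v ∈ T.verts, T.par v = none → P v)
    (hedge : ∀ v ∈ T.verts, ∀ w s, T.par v = some (w, s) → P w → P v) :
    ∀ v ∈ T.verts, P v := by
  intro v hv
  obtain ⟨k, hk⟩ := T.reaches_root v hv
  induction k generalizing v with
  | zero => exact hroot v hv hk
  | succ k ih =>
    rcases hp : T.par v with _ | ⟨w, s⟩
    · exact hroot v hv hp
    · change T.par (T.step^[k] (T.step v)) = none at hk
      rw [step_eq_of_par_eq_some hp] at hk
      exact hedge v hv w s hp (ih w (T.par_mem v hv w s hp) hk)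

def relabel (σ : ℕ ≃ ℕ) (T : PForest p) : PForest p where
  verts := T.verts.image σ
  par v := (T.par (σ.symm v)).map (Prod.map σ id)
  par_eq_none_of_not_mem v hv := by
    rw [Option.map_eq_none_iff]
    exact T.par_eq_none_of_not_mem _ fun h => hv (Finset.mem_image.2 ⟨_, h, σ.apply_symm_apply v⟩)
  par_mem v hv w s h := by
    obtain ⟨⟨u, t⟩, hu, hw⟩ := Option.map_eq_some_iff.1 h
    obtain ⟨x, hx, rfl⟩ := Finset.mem_image.1 hv
    simp only [Equiv.symm_apply_apply, Prod.map, Prod.mk.injEq] at hu hw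
    exact hw.1 ▸ Finset.mem_image_of_mem σ (T.par_mem x hx u t hu)
  par_inj u hu v hv w s h₁ h₂ := by
    obtain ⟨⟨a, t⟩, ha, haw⟩ := Option.map_eq_some_iff.1 h₁
    obtain ⟨⟨b, t'⟩, hb, hbw⟩ := Option.map_eq_some_iff.1 h₂
    simp only [Prod.map, Prod.mk.injEq, id] at haw hbw
    obtain rfl : a = b := σ.injective (haw.1.trans hbw.1.symm)
    obtain rfl : t = t' := haw.2.trans hbw.2.symm
    have hu' : σ.symm u ∈ T.verts := by
      obtain ⟨x, hx, rfl⟩ := Finset.mem_image.1 hu; simpa using hx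
    have hv' : σ.symm v ∈ T.verts := by
      obtain ⟨x, hx, rfl⟩ := Finset.mem_image.1 hv; simpa using hx
    exact σ.symm.injective (T.par_inj _ hu' _ hv' a t ha hb)
  reaches_root v hv := by
    obtain ⟨x, hx, rfl⟩ := Finset.mem_image.1 hv
    refine T.induction_on_par (P := fun x => ReachesRoot (fun v => (T.par (σ.symm v)).map
      (Prod.map σ id)) (σ x)) (fun x _ h => ⟨0, by simp [h]⟩)
      (fun x _ w s h hw => hw.of_eq_some (s := s) (by simp [h])) x hx

theorem relabel_verts (σ : ℕ ≃ ℕ) (T : PForest p) : (relabel σ T).verts = T.verts.image σ := rfl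

@[simp]
theorem relabel_par_apply (σ : ℕ ≃ ℕ) (T : PForest p) (v : ℕ) :
    (relabel σ T).par (σ v) = (T.par v).map (Prod.map σ id) := by
  simp [relabel]

theorem relabel_step_iterate (σ : ℕ ≃ ℕ) (T : PForest p) (v j : ℕ) :
    (relabel σ T).step^[j] (σ v) = σ (T.step^[j] v) := by
  induction j generalizing v with
  | zero => rfl
  | succ j ih =>
    have hstep : (relabel σ T).step (σ v) = σ (T.step v) := by
      rcases hp : T.par v with _ | ⟨w, s⟩ <;> simp [step, hp]
    rw [Function.iterate_succ_apply, Function.iterate_succ_apply, hstep, ih]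

theorem relabel_roots (σ : ℕ ≃ ℕ) (T : PForest p) : (relabel σ T).roots = T.roots.image σ := by
  ext v
  obtain ⟨x, rfl⟩ := σ.surjective v
  simp [mem_roots, relabel_verts]

theorem relabel_inMD_iff {σ : ℕ ≃ ℕ} {T : PForest p} (hmono : StrictMonoOn σ T.verts) {v : ℕ}
    (hv : v ∈ T.verts) : (relabel σ T).InMD (σ v) ↔ T.InMD v := by
  refine and_congr (iff_of_true (Finset.mem_image_of_mem σ hv) hv) (forall_congr' fun j => ?_)
  rw [relabel_step_iterate, relabel_par_apply]
  have hx := iterate_step_mem hv j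
  rcases hp : T.par (T.step^[j] v) with _ | ⟨u, t⟩
  · simp
  · simpa using hmono.lt_iff_lt hx (T.par_mem _ hx u t hp)

theorem relabel_mdSet {σ : ℕ ≃ ℕ} {T : PForest p} (hmono : StrictMonoOn σ T.verts) :
    (relabel σ T).mdSet = T.mdSet.image σ := by
  ext v
  obtain ⟨x, rfl⟩ := σ.surjective v
  rw [mem_mdSet, σ.injective.mem_finset_image, mem_mdSet]
  by_cases hx : x ∈ T.verts
  · exact relabel_inMD_iff hmono hx
  · exact iff_of_false (fun h => hx (by simpa [relabel_verts] using h.1)) fun h => hx h.1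

theorem relabel_isLeaf_iff (σ : ℕ ≃ ℕ) (T : PForest p) (v : ℕ) :
    (relabel σ T).IsLeaf (σ v) ↔ T.IsLeaf v := by
  refine ⟨fun h u s hu => h (σ u) s (by simp [hu]), fun h u s hu => ?_⟩
  obtain ⟨x, rfl⟩ := σ.surjective u
  obtain ⟨⟨a, t⟩, ha, he⟩ := Option.map_eq_some_iff.1 ((relabel_par_apply σ T x).symm.trans hu)
  simp only [Prod.map, id, Prod.mk.injEq, σ.injective.eq_iff] at he
  exact h x s (he.1 ▸ he.2 ▸ ha)

theorem relabel_symm_relabel (σ : ℕ ≃ ℕ) (T : PForest p) : relabel σ.symm (relabel σ T) = T := by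
  refine ext ?_ (funext fun v => ?_)
  · simp [relabel_verts, Finset.image_image]
  · simp [relabel, Option.map_map, Prod.map_comp_map]

def relabelEquiv (σ : ℕ ≃ ℕ) : PForest p ≃ PForest p where
  toFun := relabel σ
  invFun := relabel σ.symm
  left_inv := relabel_symm_relabel σ
  right_inv T := by simpa using relabel_symm_relabel σ.symm T

theorem card_eq_of_relabel (σ : ℕ ≃ ℕ) {P Q : PForest p → Prop}
    (h : ∀ T, Q (relabel σ T) ↔ P T) : Nat.card {T // P T} = Nat.card {T // Q T} :=
  Nat.card_congr <| (relabelEquiv σ).subtypeEquiv fun T => (h T).symm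

theorem image_eq_iff_of_image_eq {σ : ℕ ≃ ℕ} {A V V' : Finset ℕ} (h : V.image σ = V') :
    A.image σ = V' ↔ A = V := by
  subst h
  exact (Finset.image_injective σ.injective).eq_iff

theorem finite_verts_subset (V : Finset ℕ) : Finite {T : PForest p // T.verts ⊆ V} := by
  let O : Finset (Option (ℕ × Fin p)) := insert none ((V ×ˢ Finset.univ).image some)
  have hO (T : PForest p) (hT : T.verts ⊆ V) (v : ℕ) : T.par v ∈ O := by
    rcases h : T.par v with _ | ⟨w, s⟩
    · simp [O]
    · simp [O, hT (T.par_mem v (mem_verts_of_par_eq_some h) w s h)]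
  refine Finite.of_injective (fun T : {T : PForest p // T.verts ⊆ V} =>
    ((⟨T.1.verts, Finset.mem_powerset.2 T.2⟩ : V.powerset),
      fun v : V => (⟨T.1.par v, hO T.1 T.2 v⟩ : O))) fun T U h => ?_
  simp only [Prod.mk.injEq, Subtype.mk.injEq, funext_iff] at h
  refine Subtype.ext (ext h.1 (funext fun v => ?_))
  by_cases hv : v ∈ V
  · exact h.2 ⟨v, hv⟩
  · rw [T.1.par_eq_none_of_not_mem v fun h' => hv (T.2 h'),
      U.1.par_eq_none_of_not_mem v fun h' => hv (U.2 h')]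

theorem finite_of_verts_subset (V : Finset ℕ) {P : PForest p → Prop}
    (hP : ∀ T, P T → T.verts ⊆ V) : Finite {T // P T} :=
  have := finite_verts_subset (p := p) V
  Finite.of_injective (fun T => (⟨T.1, hP T.1 T.2⟩ : {T : PForest p // T.verts ⊆ V}))
    fun _ _ h => Subtype.ext (Subtype.mk.inj h)

theorem card_forests_roots_mul_choose {V R : Finset ℕ} (hR : R ⊆ V) :
    Nat.card {F : PForest p // F.verts = V ∧ F.roots = R} * V.card.choose R.card
      = f p V.card R.card := by
  have hconst : ∀ R' ∈ V.powersetCard R.card, Nat.card {F : PForest p // F.verts = V ∧ F.roots = R'}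
      = Nat.card {F : PForest p // F.verts = V ∧ F.roots = R} := by
    intro R' hR'
    rw [Finset.mem_powersetCard] at hR'
    obtain ⟨σ, h₁, h₂⟩ := exists_perm_image_eq_image_eq Finset.disjoint_sdiff
      Finset.disjoint_sdiff hR'.2
      (by rw [Finset.card_sdiff_of_subset hR'.1, Finset.card_sdiff_of_subset hR, hR'.2])
    have hV : V.image σ = V := by
      conv_lhs => rw [← Finset.union_sdiff_of_subset hR'.1]
      rw [Finset.image_union, h₁, h₂, Finset.union_sdiff_of_subset hR]
    refine card_eq_of_relabel σ fun F => ?_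
    rw [relabel_verts, relabel_roots, image_eq_iff_of_image_eq hV, image_eq_iff_of_image_eq h₁]
  have : Finite {F : PForest p // F.verts = V ∧ F.roots.card = R.card} :=
    finite_of_verts_subset V fun F hF => hF.1.le
  obtain ⟨σ, hσ⟩ := exists_perm_image_eq (A := V) (B := Finset.Icc 1 V.card) (by simp)
  calc _ = ∑ R' ∈ V.powersetCard R.card,
          Nat.card {F : PForest p // F.verts = V ∧ F.roots = R'} := by
        rw [Finset.sum_congr rfl hconst, Finset.sum_const, Finset.card_powersetCard, smul_eq_mul,
          mul_comm]
    _ = Nat.card {F : PForest p // F.verts = V ∧ F.roots.card = R.card} := by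
        rw [Nat.card_subtype_eq_sum_card_fiber roots fun F hF =>
          Finset.mem_powersetCard.2 ⟨hF.1 ▸ F.roots_subset, hF.2⟩]
        refine Finset.sum_congr rfl fun R' hR' => Nat.card_congr <| Equiv.subtypeEquivRight
          fun F => ⟨fun h => ⟨⟨h.1, ?_⟩, h.2⟩, fun h => ⟨h.1.1, h.2⟩⟩
        rw [h.2, (Finset.mem_powersetCard.1 hR').2]
    _ = f p V.card R.card := card_eq_of_relabel σ fun F => by
        rw [relabel_verts, relabel_roots, Finset.card_image_of_injective _ σ.injective,
          image_eq_iff_of_image_eq hσ]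

def LeavesOffMD (T : PForest p) : Prop := ∀ v ∈ T.verts, ¬T.InMD v → T.IsLeaf v

theorem relabel_leavesOffMD_iff {σ : ℕ ≃ ℕ} {T : PForest p} (hmono : StrictMonoOn σ T.verts) :
    (relabel σ T).LeavesOffMD ↔ T.LeavesOffMD := by
  simp only [LeavesOffMD, relabel_verts, Finset.forall_mem_image]
  exact forall₂_congr fun v hv => by rw [relabel_inMD_iff hmono hv, relabel_isLeaf_iff]

theorem LeavesOffMD.exists_par_eq_some_inMD {T : PForest p} (hT : T.LeavesOffMD) {v : ℕ}
    (hv : v ∈ T.verts) (hmd : ¬T.InMD v) : ∃ w s, T.par v = some (w, s) ∧ T.InMD w := by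
  rcases hp : T.par v with _ | ⟨w, s⟩
  · exact absurd (inMD_of_par_eq_none hv hp) hmd
  · exact ⟨w, s, rfl, by_contra fun hw => hT w (T.par_mem v hv w s hp) hw v s hp⟩

/-- Edges with an endpoint outside `V` are cut. -/
def restrict (T : PForest p) (V : Finset ℕ) : PForest p where
  verts := T.verts ∩ V
  par v := (T.par v).filter fun ws => decide (v ∈ V ∧ ws.1 ∈ V)
  par_eq_none_of_not_mem v hv := by
    rw [Option.filter_eq_none_iff]
    intro ws h hdec
    rw [decide_eq_true_eq] at hdec
    exact hv (Finset.mem_inter.2 ⟨mem_verts_of_par_eq_some h, hdec.1⟩)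
  par_mem v hv w s h := by
    simp only [Option.filter_eq_some_iff, decide_eq_true_eq] at h
    exact Finset.mem_inter.2 ⟨T.par_mem v (Finset.mem_inter.1 hv).1 w s h.1, h.2.2⟩
  par_inj u hu v hv w s hu' hv' := by
    simp only [Option.filter_eq_some_iff] at hu' hv'
    exact T.par_inj u (Finset.mem_inter.1 hu).1 v (Finset.mem_inter.1 hv).1 w s hu'.1 hv'.1
  reaches_root v hv := by
    refine T.induction_on_par (P := ReachesRoot fun v =>
      (T.par v).filter fun ws => decide (v ∈ V ∧ ws.1 ∈ V)) (fun x _ h => ⟨0, by simp [h]⟩)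
      (fun x _ w s h hw => ?_) v (Finset.mem_inter.1 hv).1
    by_cases hx : x ∈ V ∧ w ∈ V
    · exact hw.of_eq_some (s := s) (by simp [h, hx])
    · exact ⟨0, by simpa [h] using hx⟩

theorem restrict_verts_of_subset {T : PForest p} {V : Finset ℕ} (hV : V ⊆ T.verts) :
    (T.restrict V).verts = V :=
  Finset.inter_eq_right.2 hV

theorem restrict_par_eq_some_iff {T : PForest p} {V : Finset ℕ} {v w : ℕ} {s : Fin p} :
    (T.restrict V).par v = some (w, s) ↔ T.par v = some (w, s) ∧ v ∈ V ∧ w ∈ V := by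
  simp [restrict, Option.filter_eq_some_iff]

theorem restrict_par_of_mem {T : PForest p} {V : Finset ℕ} {v : ℕ} (hv : v ∈ V)
    (hpar : ∀ w s, T.par v = some (w, s) → w ∈ V) : (T.restrict V).par v = T.par v := by
  rcases hp : T.par v with _ | ⟨w, s⟩
  · simp [restrict, hp]
  · simp [restrict, hp, hv, hpar w s hp]

theorem restrict_par_eq_none {T : PForest p} {V : Finset ℕ} {v : ℕ}
    (h : ∀ w s, T.par v = some (w, s) → v ∈ V → w ∉ V) : (T.restrict V).par v = none := by
  rw [Option.eq_none_iff_forall_ne_some]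
  rintro ⟨w, s⟩ hp
  obtain ⟨hp, hv, hw⟩ := restrict_par_eq_some_iff.1 hp
  exact h w s hp hv hw

/-- The vertex set of the subtree `Y` of the paper: `MD(T)` together with its increasing leaves,
the children outside `MD(T)` of vertices of `MD(T)`. -/
noncomputable def ySet (T : PForest p) : Finset ℕ :=
  T.verts.filter fun v => T.InMD v ∨ ∃ w s, T.par v = some (w, s) ∧ T.InMD w

theorem mem_ySet {T : PForest p} {v : ℕ} :
    v ∈ T.ySet ↔ v ∈ T.verts ∧ (T.InMD v ∨ ∃ w s, T.par v = some (w, s) ∧ T.InMD w) :=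
  Finset.mem_filter

theorem ySet_subset (T : PForest p) : T.ySet ⊆ T.verts := Finset.filter_subset _ _

theorem mdSet_subset_ySet (T : PForest p) : T.mdSet ⊆ T.ySet := fun _ hv =>
  mem_ySet.2 ⟨T.mdSet_subset hv, Or.inl (mem_mdSet.1 hv)⟩

theorem inMD_of_mem_ySet_of_par_eq_some {T : PForest p} {v w : ℕ} {s : Fin p}
    (hv : v ∈ T.ySet) (hp : T.par v = some (w, s)) : T.InMD w := by
  rcases (mem_ySet.1 hv).2 with h | ⟨w', s', hp', hw'⟩
  · exact h.of_par_eq_some hp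
  · obtain ⟨rfl, -⟩ := Prod.mk.inj (Option.some.inj (hp.symm.trans hp'))
    exact hw'

theorem step_mem_ySet {T : PForest p} {v : ℕ} (hv : v ∈ T.ySet) : T.step v ∈ T.ySet := by
  rcases hp : T.par v with _ | ⟨w, s⟩
  · rwa [step_eq_of_par_eq_none hp]
  · rw [step_eq_of_par_eq_some hp]
    exact T.mdSet_subset_ySet (mem_mdSet.2 (inMD_of_mem_ySet_of_par_eq_some hv hp))

theorem restrict_ySet_verts (T : PForest p) : (T.restrict T.ySet).verts = T.ySet :=
  restrict_verts_of_subset T.ySet_subset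

theorem restrict_ySet_par {T : PForest p} {v : ℕ} (hv : v ∈ T.ySet) :
    (T.restrict T.ySet).par v = T.par v :=
  restrict_par_of_mem hv fun _ _ hp =>
    T.mdSet_subset_ySet (mem_mdSet.2 (inMD_of_mem_ySet_of_par_eq_some hv hp))

theorem restrict_ySet_inMD_iff {T : PForest p} {v : ℕ} (hv : v ∈ T.ySet) :
    (T.restrict T.ySet).InMD v ↔ T.InMD v :=
  inMD_congr (fun _ hu => restrict_ySet_par hu) (fun _ hu => step_mem_ySet hu) hv <| by
    rw [restrict_ySet_verts]
    exact iff_of_true hv (T.ySet_subset hv)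

theorem restrict_ySet_mdSet (T : PForest p) : (T.restrict T.ySet).mdSet = T.mdSet := by
  ext v
  rw [mem_mdSet, mem_mdSet]
  by_cases hv : v ∈ T.ySet
  · exact restrict_ySet_inMD_iff hv
  · refine iff_of_false (fun h => hv ?_) fun h => hv (T.mdSet_subset_ySet (mem_mdSet.2 h))
    simpa [restrict_ySet_verts] using h.1

theorem restrict_ySet_roots (T : PForest p) : (T.restrict T.ySet).roots = T.roots := by
  ext v
  rw [mem_roots, mem_roots, restrict_ySet_verts]
  constructor
  · rintro ⟨hv, hp⟩
    exact ⟨T.ySet_subset hv, restrict_ySet_par hv ▸ hp⟩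
  · rintro ⟨hv, hp⟩
    have hv' := T.mdSet_subset_ySet (mem_mdSet.2 (inMD_of_par_eq_none hv hp))
    exact ⟨hv', (restrict_ySet_par hv').trans hp⟩

theorem restrict_ySet_leavesOffMD (T : PForest p) : (T.restrict T.ySet).LeavesOffMD := by
  intro v hv hmd u s hu
  rw [restrict_ySet_verts] at hv
  obtain ⟨hu, huY, -⟩ := restrict_par_eq_some_iff.1 hu
  exact hmd ((restrict_ySet_inMD_iff hv).2 (inMD_of_mem_ySet_of_par_eq_some huY hu))

theorem restrict_sdiff_mdSet_roots (T : PForest p) :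
    (T.restrict (T.verts \ T.mdSet)).roots = T.ySet \ T.mdSet := by
  ext v
  simp only [mem_roots, Finset.mem_sdiff, restrict_verts_of_subset Finset.sdiff_subset, mem_mdSet]
  constructor
  · rintro ⟨⟨hv, hmd⟩, hnone⟩
    refine ⟨mem_ySet.2 ⟨hv, Or.inr ?_⟩, hmd⟩
    rcases hp : T.par v with _ | ⟨w, s⟩
    · exact absurd (inMD_of_par_eq_none hv hp) hmd
    · refine ⟨w, s, rfl, by_contra fun hw => ?_⟩
      have hw' : w ∈ T.verts \ T.mdSet :=
        Finset.mem_sdiff.2 ⟨T.par_mem v hv w s hp, mt mem_mdSet.1 hw⟩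
      have := restrict_par_eq_some_iff.2 ⟨hp, Finset.mem_sdiff.2 ⟨hv, mt mem_mdSet.1 hmd⟩, hw'⟩
      rw [hnone] at this
      cases this
  · rintro ⟨hv, hmd⟩
    refine ⟨⟨T.ySet_subset hv, hmd⟩, restrict_par_eq_none fun w s hp _ hw => ?_⟩
    exact (Finset.mem_sdiff.1 hw).2 (mem_mdSet.2 (inMD_of_mem_ySet_of_par_eq_some hv hp))

/-- The forest `F` can be hung below the leaves of `Y` outside `MD(Y)`, giving a forest on `W`. -/
structure IsGluingData (W : Finset ℕ) (Y F : PForest p) : Prop where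
  verts_subset : Y.verts ⊆ W
  leavesOffMD : Y.LeavesOffMD
  verts_eq : F.verts = W \ Y.mdSet
  roots_eq : F.roots = Y.verts \ Y.mdSet

namespace IsGluingData

variable {W : Finset ℕ} {Y F : PForest p}

theorem not_inMD (h : IsGluingData W Y F) {v : ℕ} (hv : v ∈ F.verts) : ¬Y.InMD v := by
  rw [h.verts_eq, Finset.mem_sdiff, mem_mdSet] at hv
  exact hv.2

theorem par_eq_none (h : IsGluingData W Y F) {v : ℕ} (hv : v ∈ Y.verts) : F.par v = none := by
  by_cases hvF : v ∈ F.verts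
  · have : v ∈ F.roots := by
      rw [h.roots_eq, Finset.mem_sdiff, mem_mdSet]
      exact ⟨hv, h.not_inMD hvF⟩
    exact (mem_roots.1 this).2
  · exact F.par_eq_none_of_not_mem v hvF

theorem isLeaf (h : IsGluingData W Y F) {v : ℕ} (hv : v ∈ Y.verts) (hvF : v ∈ F.verts) :
    Y.IsLeaf v :=
  h.leavesOffMD v hv (h.not_inMD hvF)

def glue (h : IsGluingData W Y F) : PForest p where
  verts := Y.verts ∪ F.verts
  par v := (F.par v).or (Y.par v)
  par_eq_none_of_not_mem v hv := by
    rw [Finset.mem_union, not_or] at hv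
    rw [F.par_eq_none_of_not_mem v hv.2, Y.par_eq_none_of_not_mem v hv.1, Option.none_or]
  par_mem v _ w s hp := by
    rcases Option.or_eq_some_iff.1 hp with hF | ⟨-, hY⟩
    · exact Finset.mem_union_right _ (F.par_mem v (mem_verts_of_par_eq_some hF) w s hF)
    · exact Finset.mem_union_left _ (Y.par_mem v (mem_verts_of_par_eq_some hY) w s hY)
  par_inj u _ v _ w s hu hv := by
    rcases Option.or_eq_some_iff.1 hu with hu | ⟨-, hu⟩ <;>
      rcases Option.or_eq_some_iff.1 hv with hv | ⟨-, hv⟩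
    · exact F.par_inj u (mem_verts_of_par_eq_some hu) v (mem_verts_of_par_eq_some hv) w s hu hv
    · exact absurd hv (h.isLeaf (Y.par_mem v (mem_verts_of_par_eq_some hv) w s hv)
        (F.par_mem u (mem_verts_of_par_eq_some hu) w s hu) v s)
    · exact absurd hu (h.isLeaf (Y.par_mem u (mem_verts_of_par_eq_some hu) w s hu)
        (F.par_mem v (mem_verts_of_par_eq_some hv) w s hv) u s)
    · exact Y.par_inj u (mem_verts_of_par_eq_some hu) v (mem_verts_of_par_eq_some hv) w s hu hv
  reaches_root := by
    have hY : ∀ v ∈ Y.verts, ReachesRoot (fun v => (F.par v).or (Y.par v)) v :=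
      Y.induction_on_par (fun v hv hp => ⟨0, by simp [h.par_eq_none hv, hp]⟩)
        fun v hv w s hp hw => hw.of_eq_some (s := s) (by simp [h.par_eq_none hv, hp])
    have hF : ∀ v ∈ F.verts, ReachesRoot (fun v => (F.par v).or (Y.par v)) v := by
      refine F.induction_on_par (fun v _ hp => ?_) fun v _ w s hp hw => hw.of_eq_some (s := s) ?_
      · by_cases hv : v ∈ Y.verts
        · exact hY v hv
        · exact ⟨0, by simp [hp, Y.par_eq_none_of_not_mem v hv]⟩
      · simp [hp]
    intro v hv
    rcases Finset.mem_union.1 hv with hv | hv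
    · exact hY v hv
    · exact hF v hv

theorem glue_par_of_mem (h : IsGluingData W Y F) {v : ℕ} (hv : v ∈ Y.verts) :
    h.glue.par v = Y.par v := by
  simp [glue, h.par_eq_none hv]

theorem glue_par_of_not_mem (h : IsGluingData W Y F) {v : ℕ} (hv : v ∉ Y.verts) :
    h.glue.par v = F.par v := by
  simp [glue, Y.par_eq_none_of_not_mem v hv]

theorem glue_verts (h : IsGluingData W Y F) : h.glue.verts = W := by
  change Y.verts ∪ F.verts = W
  refine (Finset.union_subset h.verts_subset (h.verts_eq ▸ Finset.sdiff_subset)).antisymm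
    fun x hx => ?_
  by_cases hxY : x ∈ Y.verts
  · exact Finset.mem_union_left _ hxY
  · rw [h.verts_eq]
    exact Finset.mem_union_right _ (Finset.mem_sdiff.2 ⟨hx, fun hm => hxY (Y.mdSet_subset hm)⟩)

theorem glue_inMD_iff (h : IsGluingData W Y F) {v : ℕ} (hv : v ∈ Y.verts) :
    h.glue.InMD v ↔ Y.InMD v :=
  inMD_congr (fun _ hu => h.glue_par_of_mem hu) (fun _ hu => step_mem hu) hv
    (iff_of_true (Finset.mem_union_left _ hv) hv)

/-- A vertex of `F` outside `Y` lies below a root of `F`, which is a vertex of `Y` outside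
`MD(Y)`. -/
theorem mem_verts_of_glue_inMD (h : IsGluingData W Y F) {v : ℕ} (hv : h.glue.InMD v) :
    v ∈ Y.verts := by
  rcases Finset.mem_union.1 hv.1 with hvY | hvF
  · exact hvY
  refine F.induction_on_par (P := fun v => h.glue.InMD v → v ∈ Y.verts)
    (fun v hv hp _ => ?_) (fun v _ w s hp hw hmd => by_contra fun hvY => ?_) v hvF hv
  · have : v ∈ F.roots := mem_roots.2 ⟨hv, hp⟩
    rw [h.roots_eq] at this
    exact (Finset.mem_sdiff.1 this).1
  · have hmdw := hmd.of_par_eq_some ((h.glue_par_of_not_mem hvY).trans hp)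
    exact h.not_inMD (F.par_mem v (mem_verts_of_par_eq_some hp) w s hp)
      ((h.glue_inMD_iff (hw hmdw)).1 hmdw)

theorem glue_mdSet (h : IsGluingData W Y F) : h.glue.mdSet = Y.mdSet := by
  ext v
  rw [mem_mdSet, mem_mdSet]
  by_cases hv : v ∈ Y.verts
  · exact h.glue_inMD_iff hv
  · exact iff_of_false (fun hmd => hv (h.mem_verts_of_glue_inMD hmd)) fun hmd => hv hmd.1

theorem glue_roots (h : IsGluingData W Y F) : h.glue.roots = Y.roots := by
  ext v
  rw [mem_roots, mem_roots]
  by_cases hv : v ∈ Y.verts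
  · rw [h.glue_par_of_mem hv]
    exact and_congr_left' (iff_of_true (Finset.mem_union_left _ hv) hv)
  · refine iff_of_false (fun ⟨hvG, hp⟩ => hv ?_) fun h' => hv h'.1
    have hvF : v ∈ F.verts := (Finset.mem_union.1 hvG).resolve_left hv
    have : v ∈ F.roots := mem_roots.2 ⟨hvF, (h.glue_par_of_not_mem hv).symm.trans hp⟩
    rw [h.roots_eq] at this
    exact (Finset.mem_sdiff.1 this).1

theorem glue_ySet (h : IsGluingData W Y F) : h.glue.ySet = Y.verts := by
  ext v
  rw [mem_ySet]
  constructor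
  · rintro ⟨-, hmd | ⟨w, s, hp, hw⟩⟩
    · exact h.mem_verts_of_glue_inMD hmd
    · by_contra hv
      rw [h.glue_par_of_not_mem hv] at hp
      exact h.not_inMD (F.par_mem v (mem_verts_of_par_eq_some hp) w s hp)
        ((h.glue_inMD_iff (h.mem_verts_of_glue_inMD hw)).1 hw)
  · intro hv
    refine ⟨Finset.mem_union_left _ hv, ?_⟩
    by_cases hmd : Y.InMD v
    · exact Or.inl ((h.glue_inMD_iff hv).2 hmd)
    · obtain ⟨w, s, hp, hw⟩ := h.leavesOffMD.exists_par_eq_some_inMD hv hmd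
      exact Or.inr ⟨w, s, (h.glue_par_of_mem hv).trans hp, (h.glue_inMD_iff hw.1).2 hw⟩

theorem glue_restrict_verts (h : IsGluingData W Y F) : h.glue.restrict Y.verts = Y := by
  refine ext (Finset.inter_eq_right.2 Finset.subset_union_left) (funext fun v => ?_)
  by_cases hv : v ∈ Y.verts
  · rw [← h.glue_par_of_mem hv]
    exact restrict_par_of_mem hv fun w s hp =>
      Y.par_mem v hv w s ((h.glue_par_of_mem hv).symm.trans hp)
  · rw [restrict_par_eq_none fun _ _ _ hv' => absurd hv' hv, Y.par_eq_none_of_not_mem v hv]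

theorem glue_restrict_sdiff (h : IsGluingData W Y F) : h.glue.restrict (W \ Y.mdSet) = F := by
  refine ext ?_ (funext fun v => ?_)
  · rw [restrict_verts_of_subset (by rw [h.glue_verts]; exact Finset.sdiff_subset), h.verts_eq]
  by_cases hvY : v ∈ Y.verts
  · rw [h.par_eq_none hvY]
    refine restrict_par_eq_none fun w s hp hvW hwW => (Finset.mem_sdiff.1 hwW).2 ?_
    rw [h.glue_par_of_mem hvY] at hp
    obtain ⟨w', s', hp', hw'⟩ := h.leavesOffMD.exists_par_eq_some_inMD hvY
      fun hmd => (Finset.mem_sdiff.1 hvW).2 (mem_mdSet.2 hmd)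
    obtain ⟨rfl, -⟩ := Prod.mk.inj (Option.some.inj (hp.symm.trans hp'))
    exact mem_mdSet.2 hw'
  · rw [← h.glue_par_of_not_mem hvY]
    by_cases hvW : v ∈ W \ Y.mdSet
    · refine restrict_par_of_mem hvW fun w s hp => ?_
      rw [h.glue_par_of_not_mem hvY] at hp
      have hw := F.par_mem v (mem_verts_of_par_eq_some hp) w s hp
      rwa [h.verts_eq] at hw
    · rw [restrict_par_eq_none fun _ _ _ hv' => absurd hv' hvW, h.glue_par_of_not_mem hvY,
        F.par_eq_none_of_not_mem v (h.verts_eq ▸ hvW)]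

end IsGluingData

theorem isGluingData_restrict (T : PForest p) :
    IsGluingData T.verts (T.restrict T.ySet) (T.restrict (T.verts \ T.mdSet)) where
  verts_subset := by rw [restrict_ySet_verts]; exact T.ySet_subset
  leavesOffMD := T.restrict_ySet_leavesOffMD
  verts_eq := by rw [restrict_verts_of_subset Finset.sdiff_subset, restrict_ySet_mdSet]
  roots_eq := by rw [restrict_sdiff_mdSet_roots, restrict_ySet_verts, restrict_ySet_mdSet]

theorem glue_isGluingData_restrict (T : PForest p) : T.isGluingData_restrict.glue = T := by
  refine ext T.isGluingData_restrict.glue_verts (funext fun v => ?_)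
  by_cases hv : v ∈ T.ySet
  · rw [IsGluingData.glue_par_of_mem _ (by rwa [restrict_ySet_verts]), restrict_ySet_par hv]
  rw [IsGluingData.glue_par_of_not_mem _ (by rwa [restrict_ySet_verts])]
  by_cases hvT : v ∈ T.verts
  · refine restrict_par_of_mem (Finset.mem_sdiff.2 ⟨hvT, fun hmd => hv (T.mdSet_subset_ySet hmd)⟩)
      fun w s hp => Finset.mem_sdiff.2 ⟨T.par_mem v hvT w s hp, fun hmd => hv ?_⟩
    exact mem_ySet.2 ⟨hvT, Or.inr ⟨w, s, hp, mem_mdSet.1 hmd⟩⟩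
  · rw [restrict_par_eq_none fun _ _ _ hv' => absurd (Finset.mem_sdiff.1 hv').1 hvT,
      T.par_eq_none_of_not_mem v hvT]

/-- A tree of the kind counted by `y p m k`, on an `m`-element subset of `W`. -/
def IsYTreeIn (W : Finset ℕ) (m k : ℕ) (Y : PForest p) : Prop :=
  Y.verts ⊆ W ∧ Y.verts.card = m ∧ Y.roots.card = 1 ∧ Y.mdSet.card = k ∧ Y.LeavesOffMD

/-- Cutting a tree into `Y` and the forest hanging below it; the inverse is
`IsGluingData.glue`. -/
noncomputable def splitEquiv (W : Finset ℕ) (k m : ℕ) :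
    {T : PForest p // T.verts = W ∧ T.roots.card = 1 ∧ T.mdSet.card = k ∧ T.ySet.card = m} ≃
      Σ Y : {Y : PForest p // Y.IsYTreeIn W m k},
        {F : PForest p // F.verts = W \ Y.1.mdSet ∧ F.roots = Y.1.verts \ Y.1.mdSet} where
  toFun T :=
    have h := T.1.isGluingData_restrict
    ⟨⟨T.1.restrict T.1.ySet, h.verts_subset.trans T.2.1.le,
        by rw [restrict_ySet_verts]; exact T.2.2.2.2, by rw [restrict_ySet_roots]; exact T.2.2.1,
        by rw [restrict_ySet_mdSet]; exact T.2.2.2.1, h.leavesOffMD⟩,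
      ⟨T.1.restrict (T.1.verts \ T.1.mdSet), h.verts_eq.trans (congrArg (· \ _) T.2.1),
        h.roots_eq⟩⟩
  invFun YF :=
    have h : IsGluingData W YF.1.1 YF.2.1 := ⟨YF.1.2.1, YF.1.2.2.2.2.2, YF.2.2.1, YF.2.2.2⟩
    ⟨h.glue, h.glue_verts, by rw [h.glue_roots]; exact YF.1.2.2.2.1,
      by rw [h.glue_mdSet]; exact YF.1.2.2.2.2.1, by rw [h.glue_ySet]; exact YF.1.2.2.1⟩
  left_inv T := by
    obtain ⟨T, rfl, -⟩ := T
    exact Subtype.ext T.glue_isGluingData_restrict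
  right_inv YF := by
    have h : IsGluingData W YF.1.1 YF.2.1 := ⟨YF.1.2.1, YF.1.2.2.2.2.2, YF.2.2.1, YF.2.2.2⟩
    refine Sigma.subtype_ext (Subtype.ext ?_) ?_
    · change h.glue.restrict h.glue.ySet = _
      rw [h.glue_ySet]
      exact h.glue_restrict_verts
    · change h.glue.restrict (h.glue.verts \ h.glue.mdSet) = _
      rw [h.glue_verts, h.glue_mdSet]
      exact h.glue_restrict_sdiff

theorem card_eq_y {S : Finset ℕ} {m k : ℕ} (hS : S.card = m) (hm : 1 ≤ m) :
    Nat.card {Y : PForest p // Y.verts = S ∧ Y.roots.card = 1 ∧ Y.mdSet.card = k ∧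
      Y.LeavesOffMD} = y p m k := by
  obtain ⟨σ, hmono, hσ⟩ := exists_perm_strictMonoOn_image_eq_Icc S
  rw [hS] at hσ
  refine card_eq_of_relabel σ fun Y => ?_
  simp only [IsTreeOn, relabel_verts, image_eq_iff_of_image_eq hσ, relabel_roots,
    Finset.card_image_of_injective _ σ.injective, and_assoc, show min m 1 = 1 by omega]
  refine and_congr_right fun hY => ?_
  rw [relabel_mdSet (hY ▸ hmono), Finset.card_image_of_injective _ σ.injective]
  exact and_congr_right' (and_congr_right' (relabel_leavesOffMD_iff (hY ▸ hmono)))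

theorem card_isYTreeIn (W : Finset ℕ) {m k : ℕ} (hm : 1 ≤ m) :
    Nat.card {Y : PForest p // Y.IsYTreeIn W m k} = W.card.choose m * y p m k := by
  have : Finite {Y : PForest p // Y.IsYTreeIn W m k} := finite_of_verts_subset W fun Y hY => hY.1
  rw [Nat.card_subtype_eq_sum_card_fiber verts fun Y hY => Finset.mem_powersetCard.2 ⟨hY.1, hY.2.1⟩,
    ← Finset.card_powersetCard, ← smul_eq_mul, ← Finset.sum_const]
  refine Finset.sum_congr rfl fun S hS => ?_
  rw [Finset.mem_powersetCard] at hS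
  rw [← card_eq_y hS.2 hm]
  refine Nat.card_congr (Equiv.subtypeEquivRight fun Y => ⟨fun h => ⟨h.2, h.1.2.2⟩, ?_⟩)
  rintro ⟨rfl, h⟩
  exact ⟨⟨hS.1, hS.2, h⟩, rfl⟩

theorem card_trees_mul_choose (W : Finset ℕ) {k m : ℕ} (hm : 1 ≤ m) :
    Nat.card {T : PForest p // T.verts = W ∧ T.roots.card = 1 ∧ T.mdSet.card = k ∧
      T.ySet.card = m} * (W.card - k).choose (m - k)
      = W.card.choose m * y p m k * f p (W.card - k) (m - k) := by
  have : Finite {Y : PForest p // Y.IsYTreeIn W m k} := finite_of_verts_subset W fun Y hY => hY.1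
  have := Fintype.ofFinite {Y : PForest p // Y.IsYTreeIn W m k}
  have (Y : PForest p) : Finite {F : PForest p // F.verts = W \ Y.mdSet ∧
      F.roots = Y.verts \ Y.mdSet} :=
    finite_of_verts_subset W fun F hF => hF.1 ▸ Finset.sdiff_subset
  rw [Nat.card_congr (splitEquiv W k m), Nat.card_sigma, Finset.sum_mul]
  have hfiber (Y : {Y : PForest p // Y.IsYTreeIn W m k}) :
      Nat.card {F : PForest p // F.verts = W \ Y.1.mdSet ∧ F.roots = Y.1.verts \ Y.1.mdSet} *
        (W.card - k).choose (m - k) = f p (W.card - k) (m - k) := by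
    obtain ⟨hYW, hm', -, hk, -⟩ := Y.2
    have hMD := Y.1.mdSet_subset
    have hV : (W \ Y.1.mdSet).card = W.card - k := by
      rw [Finset.card_sdiff_of_subset (hMD.trans hYW), hk]
    have hR : (Y.1.verts \ Y.1.mdSet).card = m - k := by
      rw [Finset.card_sdiff_of_subset hMD, hm', hk]
    rw [← hV, ← hR]
    exact card_forests_roots_mul_choose (Finset.sdiff_subset_sdiff hYW le_rfl)
  rw [Finset.sum_congr rfl fun Y _ => hfiber Y, Finset.sum_const, Finset.card_univ,
    ← Nat.card_eq_fintype_card, card_isYTreeIn W hm, smul_eq_mul]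

end PForest

theorem stmt13_general (p n k m : ℕ) (hk : 1 ≤ k) (hkm : k ≤ m) (hmn : m ≤ n) :
    (Nat.card {T : PForest p // T.IsTreeOn n ∧ T.mdSet.card = k ∧
        (T.verts.filter
          (fun v => T.InMD v ∨ ∃ w s, T.par v = some (w, s) ∧ T.InMD w)).card = m} : ℚ)
      = (n.choose m : ℚ) * (y p m k : ℚ) *
          ((f p (n - k) (m - k) : ℚ) / (((n - k).choose (m - k) : ℕ) : ℚ)) := by
  have hcount := PForest.card_trees_mul_choose (p := p) (Finset.Icc 1 n) (k := k) (hk.trans hkm)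
  simp only [Nat.card_Icc, Nat.add_sub_cancel, PForest.ySet] at hcount
  have hchoose : (((n - k).choose (m - k) : ℕ) : ℚ) ≠ 0 :=
    Nat.cast_ne_zero.2 (Nat.choose_pos (by omega)).ne'
  simp only [PForest.IsTreeOn, show min n 1 = 1 by omega, and_assoc]
  rw [← mul_div_assoc, eq_div_iff hchoose]
  exact_mod_cast hcount

/-- The number of `p`-ary labeled trees `T` on `[n]` with `|MD(T)| = k` such
that the subtree `Y` consisting of `MD(T)` together with all its increasing
leaves has exactly `m` vertices equals
`binom(n,m) · y(m,k) · f(n-k, m-k) / binom(n-k, m-k)`. -/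
theorem stmt13 (p n k m : ℕ) (hp : 2 ≤ p) (hk : 1 ≤ k) (hkm : k ≤ m) (hmn : m ≤ n) :
    (Nat.card {T : PForest p // T.IsTreeOn n ∧ T.mdSet.card = k ∧
        (T.verts.filter
          (fun v => T.InMD v ∨ ∃ w s, T.par v = some (w, s) ∧ T.InMD w)).card = m} : ℚ)
      = (n.choose m : ℚ) * (y p m k : ℚ) *
          ((f p (n - k) (m - k) : ℚ) / (((n - k).choose (m - k) : ℕ) : ℚ)) :=
  stmt13_general p n k m hk hkm hmn
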